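/- (Mean-zero lemma) Let G = (V,E) be a D-regular simple graph on V = Fin N with D ≥ 1, and fix arbitrary orientations and orderings of the gates in the 2-round iHVA |φ(θ)⟩ = U_YZ(θ₂)·U_ZY(θ₁)·|+⟩^{⊗N}. Then for every edge (i,j) ∈ E, the mean over the uniformly random parameters θ of the expectation value ⟨φ(θ)| Z_iZ_j |φ(θ)⟩ is zero: E_θ[⟨φ(θ)| Z_iZ_j |φ(θ)⟩] = 0. -/

import Mathlib

open Matrix

noncomputable section

/-- An `N`-qubit state: a vector in `ℂ^({0,1}^N)` indexed by bit strings. -/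
abbrev QState (N : ℕ) := (Fin N → Fin 2) → ℂ

/-- An `N`-qubit operator: a `2^N × 2^N` complex matrix indexed by bit strings. -/
abbrev QOp (N : ℕ) := Matrix (Fin N → Fin 2) (Fin N → Fin 2) ℂ

def PauliX : Matrix (Fin 2) (Fin 2) ℂ := !![0, 1; 1, 0]
def PauliY : Matrix (Fin 2) (Fin 2) ℂ := !![0, -Complex.I; Complex.I, 0]
def PauliZ : Matrix (Fin 2) (Fin 2) ℂ := !![1, 0; 0, -1]

/-- The Kronecker (tensor) product `⊗ₖ P k` of one `2 × 2` matrix per qubit. -/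
def pauliString {N : ℕ} (P : Fin N → Matrix (Fin 2) (Fin 2) ℂ) : QOp N :=
  fun x y => ∏ k, P k (x k) (y k)

/-- The operator acting as `A` on qubit `i`, `B` on qubit `j` and identity elsewhere. -/
def twoQubitOp {N : ℕ} (A B : Matrix (Fin 2) (Fin 2) ℂ) (i j : Fin N) : QOp N :=
  pauliString (fun k => if k = i then A else if k = j then B else 1)

/-- Computational basis vector `|x⟩`. -/
def ket {N : ℕ} (x : Fin N → Fin 2) : QState N := fun y => if y = x then 1 else 0

/-- `|+⟩^{⊗N}`, the uniform vector with all coordinates `2^{-N/2}`. -/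
def plusN (N : ℕ) : QState N := fun _ => (((Real.sqrt 2)⁻¹ : ℝ) : ℂ) ^ N

/-- Expectation value `⟨ψ| A |ψ⟩`. -/
def expval {N : ℕ} (ψ : QState N) (A : QOp N) : ℂ :=
  ∑ x, (starRingEnd ℂ) (ψ x) * (A *ᵥ ψ) x

/-- The set of edges of `G`, each listed once as an ordered pair `(i,j)` with `i < j`. -/
def edgePairs {N : ℕ} (G : SimpleGraph (Fin N)) [DecidableRel G.Adj] :
    Finset (Fin N × Fin N) :=
  Finset.univ.filter (fun p : Fin N × Fin N => p.1 < p.2 ∧ G.Adj p.1 p.2)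

/-- The cut size `C(x)`: the number of edges `(i,j)` of `G` with `x i ≠ x j`. -/
def cutSize {N : ℕ} (G : SimpleGraph (Fin N)) [DecidableRel G.Adj] (x : Fin N → Fin 2) : ℕ :=
  ((edgePairs G).filter (fun p => x p.1 ≠ x p.2)).card

/-- The MaxCut Hamiltonian `H_MC = ∑_{(i,j) ∈ E} Z_i Z_j`. -/
def HMC {N : ℕ} (G : SimpleGraph (Fin N)) [DecidableRel G.Adj] : QOp N :=
  ∑ p ∈ edgePairs G, twoQubitOp PauliZ PauliZ p.1 p.2

/-- The cut-counting observable `Ĉ = (1/2) ∑_{(i,j) ∈ E} (1 - Z_i Z_j)`. -/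
def Chat {N : ℕ} (G : SimpleGraph (Fin N)) [DecidableRel G.Adj] : QOp N :=
  (1/2 : ℂ) • ∑ p ∈ edgePairs G, ((1 : QOp N) - twoQubitOp PauliZ PauliZ p.1 p.2)

/-- The gate `e^{-iθ Z_i Y_j / 2}`. -/
def gateZY {N : ℕ} (θ : ℝ) (i j : Fin N) : QOp N :=
  NormedSpace.exp ((-Complex.I * ((θ : ℂ) / 2)) • twoQubitOp PauliZ PauliY i j)

/-- The gate `e^{-iθ Y_i Z_j / 2}`. -/
def gateYZ {N : ℕ} (θ : ℝ) (i j : Fin N) : QOp N :=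
  NormedSpace.exp ((-Complex.I * ((θ : ℂ) / 2)) • twoQubitOp PauliY PauliZ i j)

end

open MeasureTheory in
/-- The distribution of independent parameters each uniform on `[0, 2π)`:
the product over `P` of the normalized Lebesgue measure on `[0, 2π]`. -/
noncomputable def uniformAngles (P : Type*) [Fintype P] : Measure (P → ℝ) :=
  Measure.pi fun _ =>
    (ENNReal.ofReal (2 * Real.pi))⁻¹ • volume.restrict (Set.Icc 0 (2 * Real.pi))

/-- Apply, in the order of the list `L` of edges, the gates
`exp(−(i·angle e/2) · A_i B_j)` where `(i,j) = orient e` is the fixed orientation of `e`. -/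
noncomputable def roundApply {N : ℕ} (A B : Matrix (Fin 2) (Fin 2) ℂ)
    (orient : Sym2 (Fin N) → Fin N × Fin N) (angle : Sym2 (Fin N) → ℝ)
    (L : List (Sym2 (Fin N))) (ψ : QState N) : QState N :=
  L.foldl (fun φ e =>
    NormedSpace.exp ((-Complex.I * ((angle e : ℂ) / 2)) •
      twoQubitOp A B (orient e).1 (orient e).2) *ᵥ φ) ψ

/-- The two-round iHVA state `|φ(θ)⟩ = U_YZ(θ₂) U_ZY(θ₁) |+⟩^{⊗N}`, with gate orders `L₁`,
`L₂` and one independent parameter `θ (l, e)` per round `l` and edge `e`. -/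
noncomputable def iHVA2 {N : ℕ} (orient : Sym2 (Fin N) → Fin N × Fin N)
    (L₁ L₂ : List (Sym2 (Fin N))) (θ : Fin 2 × Sym2 (Fin N) → ℝ) : QState N :=
  roundApply PauliY PauliZ orient (fun e => θ (1, e)) L₂
    (roundApply PauliZ PauliY orient (fun e => θ (0, e)) L₁ (plusN N))

/-!
Let `X_j` be the Pauli `X` on qubit `j`. It fixes `|+⟩^{⊗N}`, anticommutes with `Z_i Z_j` and
with the generator of every gate acting on qubit `j`, and commutes with all other generators.
For an involution `P` anticommuting with `X_j`, `exp(-i(2π - θ)P/2) X_j = -X_j exp(-iθP/2)`, so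
reflecting `θ ↦ 2π - θ` the angles of the gates acting on qubit `j` turns `|φ(θ)⟩` into
`±X_j |φ(θ)⟩` and thereby negates `⟨Z_i Z_j⟩`. The reflection preserves the uniform distribution
of the angles, hence the mean of `⟨Z_i Z_j⟩` is zero.
-/

open Complex MeasureTheory

section Pauli

lemma PauliX_mul_self : PauliX * PauliX = 1 := by
  simp [PauliX, one_fin_two]

lemma PauliY_mul_self : PauliY * PauliY = 1 := by
  simp [PauliY, one_fin_two]

lemma PauliZ_mul_self : PauliZ * PauliZ = 1 := by
  simp [PauliZ, one_fin_two]

lemma PauliX_mul_PauliY : PauliX * PauliY = -(PauliY * PauliX) := by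
  simp [PauliX, PauliY]

lemma PauliX_mul_PauliZ : PauliX * PauliZ = -(PauliZ * PauliX) := by
  simp [PauliX, PauliZ]

lemma conjTranspose_PauliX : PauliXᴴ = PauliX := by
  ext a b; fin_cases a <;> fin_cases b <;> simp [PauliX]

lemma sum_PauliX_apply (a : Fin 2) : ∑ b, PauliX a b = 1 := by
  fin_cases a <;> simp [PauliX, Fin.sum_univ_two]

end Pauli

section PauliString

variable {N : ℕ}

lemma pauliString_mul (P Q : Fin N → Matrix (Fin 2) (Fin 2) ℂ) :
    pauliString P * pauliString Q = pauliString (P * Q) := by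
  ext x y
  simp only [mul_apply, pauliString, Pi.mul_apply, ← Finset.prod_mul_distrib]
  rw [← Fintype.piFinset_univ, Finset.prod_univ_sum]

lemma pauliString_one : pauliString (1 : Fin N → Matrix (Fin 2) (Fin 2) ℂ) = 1 := by
  ext x y
  by_cases h : x = y
  · subst h; simp [pauliString]
  · obtain ⟨k, hk⟩ := Function.ne_iff.mp h
    simpa [pauliString, one_apply, h] using
      Finset.prod_eq_zero (Finset.mem_univ k) (by simp [hk])

lemma pauliString_mul_self {P : Fin N → Matrix (Fin 2) (Fin 2) ℂ} (hP : ∀ k, P k * P k = 1) :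
    pauliString P * pauliString P = 1 := by
  rw [pauliString_mul, ← pauliString_one]
  exact congrArg pauliString (funext hP)

lemma conjTranspose_pauliString (P : Fin N → Matrix (Fin 2) (Fin 2) ℂ) :
    (pauliString P)ᴴ = pauliString fun k => (P k)ᴴ := by
  ext x y
  simp [pauliString, conjTranspose_apply]

lemma pauliString_mulVec_const {P : Fin N → Matrix (Fin 2) (Fin 2) ℂ}
    (hP : ∀ k a, ∑ b, P k a b = 1) (c : ℂ) :
    pauliString P *ᵥ (fun _ => c) = fun _ => c := by
  funext x
  simp only [mulVec, dotProduct, pauliString, ← Finset.sum_mul]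
  rw [← Fintype.piFinset_univ, ← Finset.prod_univ_sum]
  simp [hP]

lemma pauliString_commute {P Q : Fin N → Matrix (Fin 2) (Fin 2) ℂ}
    (h : ∀ k, Commute (P k) (Q k)) : Commute (pauliString P) (pauliString Q) := by
  rw [Commute, SemiconjBy, pauliString_mul, pauliString_mul]
  exact congrArg pauliString (funext h)

lemma pauliString_mul_eq_neg {P Q : Fin N → Matrix (Fin 2) (Fin 2) ℂ} (t : Fin N)
    (ht : P t * Q t = -(Q t * P t)) (h : ∀ k ≠ t, Commute (P k) (Q k)) :
    pauliString P * pauliString Q = -(pauliString Q * pauliString P) := by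
  rw [pauliString_mul, pauliString_mul]
  ext x y
  rw [neg_apply]
  simp only [pauliString, Pi.mul_apply]
  rw [← Finset.mul_prod_erase _ _ (Finset.mem_univ t),
    ← Finset.mul_prod_erase _ (fun k => (Q k * P k) (x k) (y k)) (Finset.mem_univ t),
    Finset.prod_congr rfl fun k hk => by rw [(h k (Finset.ne_of_mem_erase hk)).eq], ht]
  simp

end PauliString

section LocalOps

variable {N : ℕ}

def singleQubitOp (A : Matrix (Fin 2) (Fin 2) ℂ) (j : Fin N) : QOp N :=
  pauliString fun k => if k = j then A else 1

lemma singleQubitOp_mul_self {A : Matrix (Fin 2) (Fin 2) ℂ} (hA : A * A = 1) (j : Fin N) :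
    singleQubitOp A j * singleQubitOp A j = 1 :=
  pauliString_mul_self fun k => by split_ifs <;> simp [hA]

lemma conjTranspose_singleQubitOp (A : Matrix (Fin 2) (Fin 2) ℂ) (j : Fin N) :
    (singleQubitOp A j)ᴴ = singleQubitOp Aᴴ j := by
  rw [singleQubitOp, conjTranspose_pauliString]
  exact congrArg pauliString (funext fun k => by split_ifs <;> simp)

lemma twoQubitOp_mul_self {A B : Matrix (Fin 2) (Fin 2) ℂ} (hA : A * A = 1) (hB : B * B = 1)
    (p q : Fin N) : twoQubitOp A B p q * twoQubitOp A B p q = 1 :=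
  pauliString_mul_self fun k => by split_ifs <;> simp [hA, hB]

lemma singleQubitOp_commute_twoQubitOp (C A B : Matrix (Fin 2) (Fin 2) ℂ) {j p q : Fin N}
    (hp : j ≠ p) (hq : j ≠ q) : Commute (singleQubitOp C j) (twoQubitOp A B p q) :=
  pauliString_commute fun k => by
    by_cases hk : k = j
    · subst hk; simp [hp, hq]
    · simp [hk]

lemma singleQubitOp_mul_twoQubitOp {C A B : Matrix (Fin 2) (Fin 2) ℂ}
    (hA : C * A = -(A * C)) (hB : C * B = -(B * C)) {j p q : Fin N} (hj : j = p ∨ j = q) :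
    singleQubitOp C j * twoQubitOp A B p q = -(twoQubitOp A B p q * singleQubitOp C j) := by
  refine pauliString_mul_eq_neg j ?_ fun k hk => by simp [hk]
  by_cases hp : j = p
  · simp [hp, hA]
  · obtain rfl := hj.resolve_left hp
    simp [hp, hB]

end LocalOps

noncomputable section Involution

variable {n : Type*} [Fintype n] [DecidableEq n]

/-- `(a, b) ↦ a • (1 + P) / 2 + b • (1 - P) / 2`, for an involution `P`. Since `exp` commutes
with it and `c • P` is the image of `(c, -c)`, it computes `exp (c • P)` from `exp` on `ℂ × ℂ`. -/
def involutionAlgHom (P : Matrix n n ℂ) (hP : P * P = 1) : (ℂ × ℂ) →ₐ[ℂ] Matrix n n ℂ where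
  toFun z := ((z.1 + z.2) / 2) • (1 : Matrix n n ℂ) + ((z.1 - z.2) / 2) • P
  map_one' := by norm_num
  map_mul' z w := by
    simp only [Prod.fst_mul, Prod.snd_mul, add_mul, mul_add, smul_mul_assoc, mul_smul_comm,
      one_mul, mul_one, hP]
    match_scalars <;> ring
  map_zero' := by simp
  map_add' z w := by
    simp only [Prod.fst_add, Prod.snd_add]
    match_scalars <;> ring
  commutes' r := by simp [Algebra.algebraMap_eq_smul_one]

lemma exp_smul_of_mul_self_eq_one {P : Matrix n n ℂ} (hP : P * P = 1) (c : ℂ) :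
    NormedSpace.exp (c • P) = cosh c • (1 : Matrix n n ℂ) + sinh c • P := by
  -- `map_exp` needs a Banach algebra structure; any matrix norm will do.
  let _ : NormedRing (Matrix n n ℂ) := Matrix.linftyOpNormedRing
  let _ : NormedAlgebra ℂ (Matrix n n ℂ) := Matrix.linftyOpNormedAlgebra
  have hcont : Continuous (involutionAlgHom P hP) := by
    change Continuous fun z : ℂ × ℂ =>
      ((z.1 + z.2) / 2) • (1 : Matrix n n ℂ) + ((z.1 - z.2) / 2) • P
    fun_prop
  have hcP : c • P = involutionAlgHom P hP (c, -c) := by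
    change c • P = ((c + -c) / 2) • (1 : Matrix n n ℂ) + ((c - -c) / 2) • P
    norm_num
  have hexp : NormedSpace.exp ((c, -c) : ℂ × ℂ) = (exp c, exp (-c)) := by
    ext <;> simp [Complex.exp_eq_exp_ℂ]
  rw [hcP]
  refine (NormedSpace.map_exp _ hcont (c, -c)).symm.trans ?_
  rw [hexp]
  change ((exp c + exp (-c)) / 2) • (1 : Matrix n n ℂ) + ((exp c - exp (-c)) / 2) • P = _
  rw [Complex.cosh, Complex.sinh]

def rotationGate (P : Matrix n n ℂ) (θ : ℝ) : Matrix n n ℂ :=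
  NormedSpace.exp ((-I * ((θ : ℂ) / 2)) • P)

lemma rotationGate_eq {P : Matrix n n ℂ} (hP : P * P = 1) (θ : ℝ) :
    rotationGate P θ = cos (θ / 2) • (1 : Matrix n n ℂ) - (I * sin (θ / 2)) • P := by
  rw [rotationGate, exp_smul_of_mul_self_eq_one hP, show -I * ((θ : ℂ) / 2) = -(θ / 2) * I by ring,
    cosh_mul_I, sinh_mul_I, cos_neg, sin_neg]
  module

lemma Commute.rotationGate_right {M P : Matrix n n ℂ} (h : Commute M P) (θ : ℝ) :
    Commute M (rotationGate P θ) :=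
  (h.smul_right _).exp_right

lemma rotationGate_two_pi_sub_mul {M P : Matrix n n ℂ} (hP : P * P = 1)
    (hMP : M * P = -(P * M)) (θ : ℝ) :
    rotationGate P (2 * Real.pi - θ) * M = -(M * rotationGate P θ) := by
  have hangle : (((2 * Real.pi - θ : ℝ) : ℂ) / 2) = Real.pi - θ / 2 := by push_cast; ring
  rw [rotationGate_eq hP, rotationGate_eq hP, hangle, cos_pi_sub, sin_pi_sub]
  simp only [sub_mul, mul_sub, smul_mul_assoc, mul_smul_comm, one_mul, mul_one, hMP]
  module

end Involution

section Rounds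

variable {N : ℕ} {A B : Matrix (Fin 2) (Fin 2) ℂ} (orient : Sym2 (Fin N) → Fin N × Fin N)

lemma roundApply_cons (angle : Sym2 (Fin N) → ℝ) (e : Sym2 (Fin N)) (L : List (Sym2 (Fin N)))
    (ψ : QState N) :
    roundApply A B orient angle (e :: L) ψ = roundApply A B orient angle L
      (rotationGate (twoQubitOp A B (orient e).1 (orient e).2) (angle e) *ᵥ ψ) := rfl

lemma roundApply_smul (angle : Sym2 (Fin N) → ℝ) (L : List (Sym2 (Fin N))) (c : ℂ)
    (ψ : QState N) :
    roundApply A B orient angle L (c • ψ) = c • roundApply A B orient angle L ψ := by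
  induction L generalizing ψ with
  | nil => rfl
  | cons e L ih => rw [roundApply_cons, roundApply_cons, mulVec_smul, ih]

lemma roundApply_reflect (hA : A * A = 1) (hB : B * B = 1)
    (hXA : PauliX * A = -(A * PauliX)) (hXB : PauliX * B = -(B * PauliX)) (j : Fin N)
    {angle angle' : Sym2 (Fin N) → ℝ}
    (hangle : ∀ e, angle' e =
      if j = (orient e).1 ∨ j = (orient e).2 then 2 * Real.pi - angle e else angle e)
    (L : List (Sym2 (Fin N))) (ψ : QState N) :
    ∃ m : ℕ, roundApply A B orient angle' L (singleQubitOp PauliX j *ᵥ ψ) =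
      (-1 : ℂ) ^ m • (singleQubitOp PauliX j *ᵥ roundApply A B orient angle L ψ) := by
  induction L generalizing ψ with
  | nil => exact ⟨0, by rw [pow_zero, one_smul]; rfl⟩
  | cons e L ih =>
    rw [roundApply_cons, roundApply_cons, hangle, mulVec_mulVec]
    split_ifs with hj
    · rw [rotationGate_two_pi_sub_mul (twoQubitOp_mul_self hA hB _ _)
        (singleQubitOp_mul_twoQubitOp hXA hXB hj), neg_mulVec, ← mulVec_mulVec,
        ← neg_one_smul ℂ, roundApply_smul]
      obtain ⟨m, hm⟩ :=
        ih (rotationGate (twoQubitOp A B (orient e).1 (orient e).2) (angle e) *ᵥ ψ)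
      exact ⟨m + 1, by rw [hm, smul_smul, pow_succ']⟩
    · rw [not_or] at hj
      rw [← ((singleQubitOp_commute_twoQubitOp PauliX A B hj.1 hj.2).rotationGate_right _).eq,
        ← mulVec_mulVec]
      exact ih _

end Rounds

section Expval

variable {N : ℕ}

lemma expval_smul (c : ℂ) (ψ : QState N) (M : QOp N) :
    expval (c • ψ) M = (star c * c) * expval ψ M := by
  simp only [expval, Pi.smul_apply, mulVec_smul, smul_eq_mul, map_mul, Finset.mul_sum]
  exact Finset.sum_congr rfl fun x _ => by rw [Complex.star_def]; ring

lemma expval_mulVec (U M : QOp N) (ψ : QState N) :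
    expval (U *ᵥ ψ) M = expval ψ (Uᴴ * M * U) := by
  change star (U *ᵥ ψ) ⬝ᵥ (M *ᵥ U *ᵥ ψ) = star ψ ⬝ᵥ ((Uᴴ * M * U) *ᵥ ψ)
  rw [star_mulVec, ← dotProduct_mulVec, mulVec_mulVec, mulVec_mulVec, mul_assoc]

lemma expval_neg (ψ : QState N) (M : QOp N) : expval ψ (-M) = -expval ψ M := by
  simp [expval, neg_mulVec, Finset.sum_neg_distrib]

lemma singleQubitOp_PauliX_mulVec_plusN (j : Fin N) :
    singleQubitOp PauliX j *ᵥ plusN N = plusN N :=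
  pauliString_mulVec_const (fun k a => by
    split_ifs
    · exact sum_PauliX_apply a
    · simp [one_apply]) _

lemma expval_singleQubitOp_PauliX_mulVec {M : QOp N} {j : Fin N}
    (hM : singleQubitOp PauliX j * M = -(M * singleQubitOp PauliX j)) (ψ : QState N) :
    expval (singleQubitOp PauliX j *ᵥ ψ) M = -expval ψ M := by
  rw [expval_mulVec, conjTranspose_singleQubitOp, conjTranspose_PauliX, hM, neg_mul, mul_assoc,
    singleQubitOp_mul_self PauliX_mul_self, mul_one, expval_neg]

end Expval

lemma iHVA2_reflect {N : ℕ} (orient : Sym2 (Fin N) → Fin N × Fin N) (L₁ L₂ : List (Sym2 (Fin N)))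
    (j : Fin N) {θ θ' : Fin 2 × Sym2 (Fin N) → ℝ}
    (hθ : ∀ p, θ' p =
      if j = (orient p.2).1 ∨ j = (orient p.2).2 then 2 * Real.pi - θ p else θ p) :
    ∃ m : ℕ, iHVA2 orient L₁ L₂ θ' =
      (-1 : ℂ) ^ m • (singleQubitOp PauliX j *ᵥ iHVA2 orient L₁ L₂ θ) := by
  obtain ⟨m₁, h₁⟩ := roundApply_reflect orient PauliZ_mul_self
    PauliY_mul_self PauliX_mul_PauliZ PauliX_mul_PauliY j (fun e => hθ (0, e)) L₁ (plusN N)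
  obtain ⟨m₂, h₂⟩ := roundApply_reflect orient PauliY_mul_self
    PauliZ_mul_self PauliX_mul_PauliY PauliX_mul_PauliZ j (fun e => hθ (1, e)) L₂
    (roundApply PauliZ PauliY orient (fun e => θ (0, e)) L₁ (plusN N))
  refine ⟨m₁ + m₂, ?_⟩
  rw [iHVA2, ← singleQubitOp_PauliX_mulVec_plusN j, h₁, roundApply_smul, h₂, smul_smul, ← pow_add]
  rfl

section UniformAngles

lemma integral_eq_zero_of_comp_eq_neg {α E : Type*} [MeasurableSpace α] [NormedAddCommGroup E]
    [NormedSpace ℝ E] {μ : Measure α} {e : α ≃ᵐ α} (he : MeasurePreserving e μ μ) {f : α → E}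
    (hf : ∀ x, f (e x) = -f x) : ∫ x, f x ∂μ = 0 := by
  have h := he.integral_comp' f
  simp only [hf, integral_neg] at h
  linear_combination (norm := module) (-(1 / 2 : ℝ)) • h

lemma measurePreserving_sub_left_smul_restrict_Icc (b : ℝ) (c : ENNReal) :
    MeasurePreserving (b - ·) (c • volume.restrict (Set.Icc 0 b))
      (c • volume.restrict (Set.Icc 0 b)) := by
  have h := (Measure.measurePreserving_sub_left volume b).restrict_preimage
    (measurableSet_Icc (a := 0) (b := b))
  rw [Set.preimage_const_sub_Icc, sub_self, sub_zero] at h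
  exact h.smul_measure c

noncomputable def reflectAngles {P : Type*} (s : P → Prop) [DecidablePred s] :
    (P → ℝ) ≃ᵐ (P → ℝ) :=
  MeasurableEquiv.piCongrRight fun p =>
    if s p then MeasurableEquiv.subLeft (2 * Real.pi) else MeasurableEquiv.refl ℝ

lemma reflectAngles_apply {P : Type*} (s : P → Prop) [DecidablePred s] (θ : P → ℝ) (p : P) :
    reflectAngles s θ p = if s p then 2 * Real.pi - θ p else θ p := by
  change (if s p then MeasurableEquiv.subLeft (2 * Real.pi) else MeasurableEquiv.refl ℝ) (θ p) = _
  split_ifs <;> rfl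

lemma measurePreserving_reflectAngles {P : Type*} [Fintype P] (s : P → Prop) [DecidablePred s] :
    MeasurePreserving (reflectAngles s) (uniformAngles P) (uniformAngles P) := by
  have : IsFiniteMeasure ((ENNReal.ofReal (2 * Real.pi))⁻¹ •
      volume.restrict (Set.Icc 0 (2 * Real.pi))) :=
    Measure.smul_finite _ (ENNReal.inv_ne_top.mpr (by simp [Real.pi_pos]))
  refine measurePreserving_pi _ _ fun p => ?_
  dsimp only
  split_ifs
  · exact measurePreserving_sub_left_smul_restrict_Icc _ _
  · exact MeasurePreserving.id _

end UniformAngles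

theorem iHVA2_edge_expectation_mean_zero_general {N : ℕ}
    (orient : Sym2 (Fin N) → Fin N × Fin N)
    (L₁ L₂ : List (Sym2 (Fin N)))
    (i j : Fin N) :
    ∫ θ, expval (iHVA2 orient L₁ L₂ θ) (twoQubitOp PauliZ PauliZ i j)
        ∂(uniformAngles (Fin 2 × Sym2 (Fin N))) = 0 := by
  let s (p : Fin 2 × Sym2 (Fin N)) : Prop := j = (orient p.2).1 ∨ j = (orient p.2).2
  refine integral_eq_zero_of_comp_eq_neg (measurePreserving_reflectAngles s) fun θ => ?_
  obtain ⟨m, hm⟩ := iHVA2_reflect orient L₁ L₂ j (reflectAngles_apply s θ)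
  have hZZ := singleQubitOp_mul_twoQubitOp PauliX_mul_PauliZ PauliX_mul_PauliZ
    (Or.inr rfl : j = i ∨ j = j)
  rw [hm, expval_smul, expval_singleQubitOp_PauliX_mulVec hZZ]
  simp [← pow_add, ← two_mul, pow_mul]

/-- **mean-zero lemma.** For a `D`-regular graph `G` on `Fin N` (`D ≥ 1`),
with arbitrary fixed orientations and per-round gate orderings of the 2-round iHVA, the mean
over uniformly random parameters of `⟨φ(θ)| Z_i Z_j |φ(θ)⟩` vanishes for every edge `(i,j)`. -/
theorem iHVA2_edge_expectation_mean_zero {N D : ℕ} (hD : 1 ≤ D)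
    (G : SimpleGraph (Fin N)) [DecidableRel G.Adj] (hreg : ∀ v, G.degree v = D)
    (orient : Sym2 (Fin N) → Fin N × Fin N)
    (horient : ∀ e ∈ G.edgeFinset, Sym2.mk (orient e).1 (orient e).2 = e)
    (L₁ L₂ : List (Sym2 (Fin N)))
    (hL₁ : L₁.Perm G.edgeFinset.toList) (hL₂ : L₂.Perm G.edgeFinset.toList)
    (i j : Fin N) (hij : G.Adj i j) :
    ∫ θ, expval (iHVA2 orient L₁ L₂ θ) (twoQubitOp PauliZ PauliZ i j)
        ∂(uniformAngles (Fin 2 × Sym2 (Fin N))) = 0 :=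
  iHVA2_edge_expectation_mean_zero_general orient L₁ L₂ i j
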